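/- Let p be a primitive element of F(x,y) with exponent sum pair (X,Y). An element r of F(x,y) lies in the normal closure of p if and only if the exponent sum pair of r equals (kX, kY) for some integer k. -/

import Mathlib

/-!
An automorphism `θ` with `θ x = p` carries the normal closure of `x` onto that of `p`, and the
normal closure of `x` is the kernel of the `y`-exponent sum, because `F(x,y)/⟨⟨x⟩⟩ ≅ ℤ` is
generated by the image of `y`. Exponent sums of `θ w` depend only on those of `w` (they are
the image of the abelianization under the matrix of `θ`). Hence `r ∈ ⟨⟨p⟩⟩` iff `θ⁻¹ r` has the
exponent sums `(k, 0)` of `x ^ k` for some `k`, iff `r` has the exponent sums `(kX, kY)` of `p ^ k`.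
-/

abbrev F2 := FreeGroup (Fin 2)

/-- The generator `x` of the free group of rank 2. -/
def xg : F2 := FreeGroup.of 0

/-- The generator `y` of the free group of rank 2. -/
def yg : F2 := FreeGroup.of 1

/-- The exponent sum of the `i`-th generator in a word `w`. -/
def expSum (i : Fin 2) (w : F2) : ℤ :=
  Multiplicative.toAdd
    ((FreeGroup.lift fun j => Multiplicative.ofAdd (if j = i then (1 : ℤ) else 0)) w)

/-- An element is primitive if it is the image of `x` under an automorphism. -/
def IsPrimitive (w : F2) : Prop := ∃ θ : F2 ≃* F2, θ xg = w

/-- A palindrome: the reduced word reads the same forwards and backwards. -/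
def IsPalindrome (w : F2) : Prop := w.toWord.reverse = w.toWord

/-- Only positive exponents appear in the reduced word of `w`. -/
def PosWord (w : F2) : Prop := ∀ l ∈ w.toWord, l.2 = true

theorem Subgroup.mem_normalClosure_singleton_equiv {G H : Type*} [Group G] [Group H]
    (θ : G ≃* H) (g : G) (x : H) :
    x ∈ normalClosure {θ g} ↔ θ.symm x ∈ normalClosure {g} := by
  rw [← Set.image_singleton, ← MulEquiv.coe_toMonoidHom,
    ← map_normalClosure _ _ θ.surjective, mem_map_equiv]

def expSumHom (i : Fin 2) : F2 →* Multiplicative ℤ :=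
  FreeGroup.lift fun j => Multiplicative.ofAdd (if j = i then (1 : ℤ) else 0)

theorem expSum_eq_toAdd_expSumHom (i : Fin 2) (w : F2) :
    expSum i w = Multiplicative.toAdd (expSumHom i w) := rfl

@[simp]
theorem expSum_one (i : Fin 2) : expSum i 1 = 0 := by
  simp [expSum_eq_toAdd_expSumHom]

@[simp]
theorem expSum_mul (i : Fin 2) (v w : F2) : expSum i (v * w) = expSum i v + expSum i w := by
  simp [expSum_eq_toAdd_expSumHom]

@[simp]
theorem expSum_inv (i : Fin 2) (w : F2) : expSum i w⁻¹ = -expSum i w := by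
  simp [expSum_eq_toAdd_expSumHom]

@[simp]
theorem expSum_zpow (i : Fin 2) (w : F2) (k : ℤ) : expSum i (w ^ k) = k * expSum i w := by
  simp [expSum_eq_toAdd_expSumHom]

@[simp]
theorem expSum_of (i j : Fin 2) : expSum i (FreeGroup.of j) = if j = i then 1 else 0 := by
  simp [expSum_eq_toAdd_expSumHom, expSumHom]

theorem expSum_map (f : F2 →* F2) (i : Fin 2) (w : F2) :
    expSum i (f w) = expSum 0 w * expSum i (f xg) + expSum 1 w * expSum i (f yg) := by
  induction w using FreeGroup.induction_on with
  | C1 => simp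
  | of j => fin_cases j <;> simp [xg, yg]
  | inv_of j ih => simp only [map_inv, expSum_inv, ih]; ring
  | mul v w ihv ihw => simp only [map_mul, expSum_mul, ihv, ihw]; ring

theorem expSum_map_congr (f : F2 →* F2) {v w : F2} (h : ∀ i, expSum i v = expSum i w)
    (i : Fin 2) : expSum i (f v) = expSum i (f w) := by
  rw [expSum_map f i v, expSum_map f i w, h 0, h 1]

theorem normalClosure_xg_eq_ker : Subgroup.normalClosure {xg} = (expSumHom 1).ker := by
  apply le_antisymm
  · refine Subgroup.normalClosure_le_normal (Set.singleton_subset_iff.mpr ?_)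
    simp [expSumHom, xg]
  · intro w hw
    let π := QuotientGroup.mk' (Subgroup.normalClosure ({xg} : Set F2))
    -- `π` kills `x`, so it factors through the `y`-exponent sum as `n ↦ π y ^ n`
    have hπ : (zpowersHom _ (π yg)).comp (expSumHom 1) = π := by
      refine FreeGroup.ext_hom _ _ (Fin.forall_fin_two.mpr ⟨?_, ?_⟩)
      · have hx : π (FreeGroup.of 0) = 1 :=
          (QuotientGroup.eq_one_iff xg).mpr (Subgroup.subset_normalClosure rfl)
        rw [MonoidHom.comp_apply, hx]
        simp [expSumHom]
      · simp [expSumHom, π, yg]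
    have hπw := DFunLike.congr_fun hπ w
    rw [MonoidHom.comp_apply, MonoidHom.mem_ker.mp hw, map_one, eq_comm] at hπw
    exact (QuotientGroup.eq_one_iff w).mp hπw

theorem mem_normalClosure_xg_iff (w : F2) :
    w ∈ Subgroup.normalClosure {xg} ↔ expSum 1 w = 0 := by
  rw [normalClosure_xg_eq_ker, MonoidHom.mem_ker, expSum_eq_toAdd_expSumHom, toAdd_eq_zero]

theorem mem_normalClosure_primitive_iff (p : F2) (hp : IsPrimitive p) (X Y : ℤ)
    (hX : expSum 0 p = X) (hY : expSum 1 p = Y) (r : F2) :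
    r ∈ Subgroup.normalClosure {p} ↔
      ∃ k : ℤ, expSum 0 r = k * X ∧ expSum 1 r = k * Y := by
  obtain ⟨θ, rfl⟩ := hp
  subst hX hY
  rw [Subgroup.mem_normalClosure_singleton_equiv, mem_normalClosure_xg_iff]
  constructor
  · intro hy
    set k := expSum 0 (θ.symm r)
    have hr : ∀ i, expSum i (θ.symm r) = expSum i (xg ^ k) := by
      simp [Fin.forall_fin_two, xg, hy, k]
    have := expSum_map_congr θ.toMonoidHom hr
    exact ⟨k, by simpa using this 0, by simpa using this 1⟩
  · rintro ⟨k, h0, h1⟩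
    have hr : ∀ i, expSum i r = expSum i (θ xg ^ k) := by
      simp [Fin.forall_fin_two, h0, h1]
    simpa [xg] using expSum_map_congr θ.symm.toMonoidHom hr 1
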